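/- For c > 0 define β(c) = (8π/27)·A(c)⁴/B(c)³ with A(c) = Σ_{k≥1} e^{−ck}/k³, B(c) = Σ_{k≥1} e^{−ck}/k⁴. Then β'(c) = β(c)·(3A(c)² − 4C(c)B(c))/(A(c)B(c)), where C(c) = Σ_{k≥1} e^{−ck}/k², and β'(c) < 0. -/

import Mathlib

/-!
Write `A, B, C` for `Li₃, Li₄, Li₂` at `e^{-c}`. Termwise differentiation gives `A' = -C` and
`B' = -A`, so the logarithmic derivative of `β = K A⁴ / B³` is `-4C/A + 3A/B`. Cauchy–Schwarz
applied to the sequences `e^{-ck/2}/k` and `e^{-ck/2}/k²` gives `A² ≤ C B`, hence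
`3A² - 4CB ≤ -CB < 0`.
-/

open Real

theorem tsum_sq_le_tsum_mul_tsum_of_sq_le_mul {ι : Type*} {r f g : ι → ℝ}
    (hr : Summable r) (hf : Summable f) (hg : Summable g)
    (hf₀ : ∀ i, 0 ≤ f i) (hg₀ : ∀ i, 0 ≤ g i) (h : ∀ i, r i ^ 2 ≤ f i * g i) :
    (∑' i, r i) ^ 2 ≤ (∑' i, f i) * ∑' i, g i := by
  refine le_of_tendsto (hr.hasSum.pow 2) (Filter.Eventually.of_forall fun s => ?_)
  calc (∑ i ∈ s, r i) ^ 2 ≤ (∑ i ∈ s, f i) * ∑ i ∈ s, g i :=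
        Finset.sum_sq_le_sum_mul_sum_of_sq_le_mul s (fun i _ => hf₀ i) (fun i _ => hg₀ i)
          fun i _ => h i
    _ ≤ (∑' i, f i) * ∑' i, g i :=
        mul_le_mul (hf.sum_le_tsum s fun i _ => hf₀ i) (hg.sum_le_tsum s fun i _ => hg₀ i)
          (Finset.sum_nonneg fun i _ => hg₀ i) (tsum_nonneg hf₀)

theorem HasDerivAt.const_mul_pow_div_pow {f g : ℝ → ℝ} {f' g' x : ℝ} (K : ℝ) (m n : ℕ)
    (hf : HasDerivAt f f' x) (hg : HasDerivAt g g' x) (hfx : f x ≠ 0) (hgx : g x ≠ 0) :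
    HasDerivAt (fun y => K * f y ^ m / g y ^ n)
      (K * f x ^ m / g x ^ n * (m * f' / f x - n * g' / g x)) x := by
  refine (((hf.fun_pow m).const_mul K).fun_div (hg.fun_pow n) (pow_ne_zero n hgx)).congr_deriv ?_
  obtain _ | m := m <;> obtain _ | n := n <;>
    simp only [Nat.cast_zero, Nat.cast_succ, Nat.add_sub_cancel, pow_succ] <;>
    field_simp <;> ring

/-- `polylogExpNeg p x = Li_p (exp (-x))`. -/
noncomputable def polylogExpNeg (p : ℕ) (x : ℝ) : ℝ :=
  ∑' k : ℕ, exp (-x * ((k : ℝ) + 1)) / ((k : ℝ) + 1) ^ p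

lemma exp_neg_mul_succ_div_pow_le (p k : ℕ) (x : ℝ) :
    exp (-x * ((k : ℝ) + 1)) / ((k : ℝ) + 1) ^ p ≤ exp (-x * ((k : ℝ) + 1)) :=
  div_le_self (exp_nonneg _) (one_le_pow₀ (by linarith [k.cast_nonneg (α := ℝ)]))

lemma summable_exp_neg_mul_succ_div_pow (p : ℕ) {x : ℝ} (hx : 0 < x) :
    Summable fun k : ℕ => exp (-x * ((k : ℝ) + 1)) / ((k : ℝ) + 1) ^ p :=
  (summable_exp_nat_mul_of_ge (neg_neg_of_pos hx) fun k => by simp).of_nonneg_of_le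
    (fun _ => by positivity) fun k => exp_neg_mul_succ_div_pow_le p k x

lemma polylogExpNeg_pos (p : ℕ) {x : ℝ} (hx : 0 < x) : 0 < polylogExpNeg p x :=
  (summable_exp_neg_mul_succ_div_pow p hx).tsum_pos (fun _ => by positivity) 0 (by positivity)

lemma hasDerivAt_exp_neg_mul_succ_div_pow (p k : ℕ) (x : ℝ) :
    HasDerivAt (fun y => exp (-y * ((k : ℝ) + 1)) / ((k : ℝ) + 1) ^ (p + 1))
      (-(exp (-x * ((k : ℝ) + 1)) / ((k : ℝ) + 1) ^ p)) x := by
  refine ((((hasDerivAt_neg x).mul_const ((k : ℝ) + 1)).exp).div_const _).congr_deriv ?_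
  have : (k : ℝ) + 1 ≠ 0 := by positivity
  field_simp
  ring

lemma hasDerivAt_polylogExpNeg_succ (p : ℕ) {x : ℝ} (hx : 0 < x) :
    HasDerivAt (polylogExpNeg (p + 1)) (-polylogExpNeg p x) x := by
  rw [polylogExpNeg, ← tsum_neg]
  -- on `x / 2 < y` the derivatives are dominated by the summable `exp (-(x / 2) * (k + 1))`
  refine hasDerivAt_tsum_of_isPreconnected (t := Set.Ioi (x / 2))
    (summable_exp_neg_mul_succ_div_pow 0 (half_pos hx)) isOpen_Ioi isPreconnected_Ioi
    (fun k y _ => hasDerivAt_exp_neg_mul_succ_div_pow p k y) (fun k y hy => ?_)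
    (Set.mem_Ioi.2 (half_lt_self hx)) (summable_exp_neg_mul_succ_div_pow (p + 1) hx)
    (Set.mem_Ioi.2 (half_lt_self hx))
  rw [norm_neg, norm_of_nonneg (by positivity), pow_zero, div_one]
  refine (exp_neg_mul_succ_div_pow_le p k y).trans (exp_le_exp.2 ?_)
  nlinarith [Set.mem_Ioi.1 hy, k.cast_nonneg (α := ℝ)]

lemma polylogExpNeg_sq_le (p : ℕ) {x : ℝ} (hx : 0 < x) :
    polylogExpNeg (p + 1) x ^ 2 ≤ polylogExpNeg p x * polylogExpNeg (p + 2) x := by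
  refine tsum_sq_le_tsum_mul_tsum_of_sq_le_mul (summable_exp_neg_mul_succ_div_pow _ hx)
    (summable_exp_neg_mul_succ_div_pow _ hx) (summable_exp_neg_mul_succ_div_pow _ hx)
    (fun _ => by positivity) (fun _ => by positivity) fun k => le_of_eq ?_
  have : (k : ℝ) + 1 ≠ 0 := by positivity
  field_simp
  ring

theorem stmt19 (c : ℝ) (hc : 0 < c) :
    let A : ℝ → ℝ := fun c => ∑' k : ℕ, Real.exp (-c * ((k : ℝ) + 1)) / ((k : ℝ) + 1) ^ 3
    let B : ℝ → ℝ := fun c => ∑' k : ℕ, Real.exp (-c * ((k : ℝ) + 1)) / ((k : ℝ) + 1) ^ 4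
    let Cs : ℝ → ℝ := fun c => ∑' k : ℕ, Real.exp (-c * ((k : ℝ) + 1)) / ((k : ℝ) + 1) ^ 2
    let β : ℝ → ℝ := fun c => (8 * π / 27) * A c ^ 4 / B c ^ 3
    HasDerivAt β (β c * (3 * A c ^ 2 - 4 * Cs c * B c) / (A c * B c)) c ∧
    β c * (3 * A c ^ 2 - 4 * Cs c * B c) / (A c * B c) < 0 := by
  intro A B Cs β
  have hA : 0 < A c := polylogExpNeg_pos 3 hc
  have hB : 0 < B c := polylogExpNeg_pos 4 hc
  have hC : 0 < Cs c := polylogExpNeg_pos 2 hc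
  have hβ : 0 < β c := by positivity [pi_pos]
  have hCS : A c ^ 2 ≤ Cs c * B c := polylogExpNeg_sq_le 2 hc
  have hlogDeriv : β c * (3 * A c ^ 2 - 4 * Cs c * B c) / (A c * B c)
      = β c * (4 * (-Cs c) / A c - 3 * (-A c) / B c) := by
    field_simp
    ring
  refine ⟨?_, ?_⟩
  · rw [hlogDeriv]
    exact (hasDerivAt_polylogExpNeg_succ 2 hc).const_mul_pow_div_pow (8 * π / 27) 4 3
      (hasDerivAt_polylogExpNeg_succ 3 hc) hA.ne' hB.ne'
  · exact div_neg_of_neg_of_pos (mul_neg_of_pos_of_neg hβ (by nlinarith)) (by positivity)
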